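/- Let (χ_{D₁ᵏ}, χ_{D₂ᵏ}) ∈ B, and define φ₁ = (1/√δt)·G_{δt} * (γ_LV χ_{D₂ᵏ} + γ_SL χ_{D₃}) and φ₂ = (1/√δt)·G_{δt} * (γ_LV χ_{D₁ᵏ} + γ_SV χ_{D₃}), together with the linearized functional L̂(u₁,u₂) = ∫_{ℝⁿ} u₁ φ₁ dx + ∫_{ℝⁿ} u₂ φ₂ dx. Suppose δ ∈ ℝ is such that the set D₁^{k+1} := {x ∈ Ω : φ₁(x) < φ₂(x) + δ} has measure V₀, and set D₂^{k+1} = Ω \ D₁^{k+1}. Then (χ_{D₁^{k+1}}, χ_{D₂^{k+1}}) minimizes L̂ over K: for every (u₁,u₂) ∈ K, L̂(χ_{D₁^{k+1}}, χ_{D₂^{k+1}}) ≤ L̂(u₁,u₂). -/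

import Mathlib

open MeasureTheory Real Set

/-- The Gaussian (heat) kernel `G_t(x) = (4πt)^{-n/2} exp(-|x|²/(4t))` on `ℝⁿ`. -/
noncomputable def gauss (n : ℕ) (t : ℝ) (x : EuclideanSpace ℝ (Fin n)) : ℝ :=
  (4 * Real.pi * t) ^ (-(n : ℝ) / 2) * Real.exp (-‖x‖ ^ 2 / (4 * t))

/-- Convolution with the Gaussian kernel: `(G_t * f)(x) = ∫ G_t(x - y) f(y) dy`. -/
noncomputable def gconv (n : ℕ) (t : ℝ) (f : EuclideanSpace ℝ (Fin n) → ℝ)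
    (x : EuclideanSpace ℝ (Fin n)) : ℝ :=
  ∫ y, gauss n t (x - y) * f y

/-- The indicator function `χ_A` of a set `A ⊆ ℝⁿ`. -/
noncomputable def chi (n : ℕ) (A : Set (EuclideanSpace ℝ (Fin n))) :
    EuclideanSpace ℝ (Fin n) → ℝ :=
  Set.indicator A fun _ => (1 : ℝ)

/-- The approximate interfacial energy
`E^{δt}(u₁,u₂) = (1/√δt)[γ_LV ∫ u₁ (G_{δt}*u₂) + γ_SL ∫ u₁ (G_{δt}*χ_{D₃})
  + γ_SV ∫ u₂ (G_{δt}*χ_{D₃})]`. -/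
noncomputable def Efun (n : ℕ) (δt γLV γSL γSV : ℝ) (D₃ : Set (EuclideanSpace ℝ (Fin n)))
    (u₁ u₂ : EuclideanSpace ℝ (Fin n) → ℝ) : ℝ :=
  (1 / Real.sqrt δt) *
    (γLV * (∫ x, u₁ x * gconv n δt u₂ x)
      + γSL * (∫ x, u₁ x * gconv n δt (chi n D₃) x)
      + γSV * ∫ x, u₂ x * gconv n δt (chi n D₃) x)

/-- The convex relaxed admissible set `K`: measurable pairs with `0 ≤ u₁,u₂ ≤ 1`,
`u₁ + u₂ = χ_Ω` a.e., and `∫ u₁ = V₀`. -/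
def Kset (n : ℕ) (Ω : Set (EuclideanSpace ℝ (Fin n))) (V₀ : ℝ) :
    Set ((EuclideanSpace ℝ (Fin n) → ℝ) × (EuclideanSpace ℝ (Fin n) → ℝ)) :=
  {p | Measurable p.1 ∧ Measurable p.2 ∧
    (∀ᵐ x ∂(volume : Measure (EuclideanSpace ℝ (Fin n))),
      0 ≤ p.1 x ∧ p.1 x ≤ 1 ∧ 0 ≤ p.2 x ∧ p.2 x ≤ 1 ∧ p.1 x + p.2 x = chi n Ω x) ∧
    (∫ x, p.1 x) = V₀}

/-- The admissible set `B`: measurable pairs of `{0,1}`-valued functions with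
`u₁ + u₂ = χ_Ω` a.e. and `∫ u₁ = V₀`. -/
def Bset (n : ℕ) (Ω : Set (EuclideanSpace ℝ (Fin n))) (V₀ : ℝ) :
    Set ((EuclideanSpace ℝ (Fin n) → ℝ) × (EuclideanSpace ℝ (Fin n) → ℝ)) :=
  {p | Measurable p.1 ∧ Measurable p.2 ∧
    (∀ᵐ x ∂(volume : Measure (EuclideanSpace ℝ (Fin n))),
      (p.1 x = 0 ∨ p.1 x = 1) ∧ (p.2 x = 0 ∨ p.2 x = 1) ∧ p.1 x + p.2 x = chi n Ω x) ∧
    (∫ x, p.1 x) = V₀}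

open scoped ENNReal

/-! Since `u₂ = χ_Ω - u₁` a.e., the linearized functional equals `∫ u₁ (φ₁ - φ₂) + ∫_Ω φ₂`, and
the claim is a bathtub principle for `ψ = φ₁ - φ₂`: if `D = {ψ < δ} ∩ Ω` and `0 ≤ u ≤ χ_Ω` has the
same mass as `D`, then `(u - χ_D)(ψ - δ) ≥ 0` pointwise, and integrating, the `δ`-terms cancel.
The potentials are convolutions of bounded functions with an integrable kernel, hence bounded, which
makes everything integrable on the finite-measure set `Ω`. -/

section Thresholding

theorem indicator_one_nonneg_and_le_of_subset {α : Type*} {D Ω : Set α} (h : D ⊆ Ω) (x : α) :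
    0 ≤ D.indicator (1 : α → ℝ) x ∧ D.indicator (1 : α → ℝ) x ≤ Ω.indicator 1 x :=
  ⟨indicator_nonneg (fun _ _ => zero_le_one) x,
    indicator_le_indicator_of_subset (f := (1 : α → ℝ)) h (fun _ => zero_le_one) x⟩

variable {α : Type*} [MeasurableSpace α] {μ : Measure α} {Ω : Set α}

theorem integrable_mul_of_ae_le_indicator {u φ : α → ℝ} (hΩ : MeasurableSet Ω)
    (hu : AEStronglyMeasurable u μ) (hu₀₁ : ∀ᵐ x ∂μ, 0 ≤ u x ∧ u x ≤ Ω.indicator 1 x)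
    (hφ : IntegrableOn φ Ω μ) : Integrable (fun x => u x * φ x) μ := by
  have hle : ∀ᵐ x ∂μ, ‖u x‖ ≤ 1 := by
    filter_upwards [hu₀₁] with x ⟨h0, h1⟩
    rw [Real.norm_of_nonneg h0]
    exact h1.trans (indicator_le_self' (fun _ _ => zero_le_one) x)
  refine ((hφ.integrable_indicator hΩ).bdd_mul hu hle).congr ?_
  filter_upwards [hu₀₁] with x ⟨h0, h1⟩
  by_cases hx : x ∈ Ω
  · simp [hx]
  · simp only [hx, not_false_eq_true, indicator_of_notMem] at h1 ⊢
    rw [le_antisymm h1 h0, zero_mul, zero_mul]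

theorem integral_mul_add_integral_mul_eq {u₁ u₂ φ₁ φ₂ : α → ℝ} (hΩ : MeasurableSet Ω)
    (hu₁ : AEStronglyMeasurable u₁ μ) (hu₁₀₁ : ∀ᵐ x ∂μ, 0 ≤ u₁ x ∧ u₁ x ≤ Ω.indicator 1 x)
    (hsum : ∀ᵐ x ∂μ, u₁ x + u₂ x = Ω.indicator 1 x)
    (hφ₁ : IntegrableOn φ₁ Ω μ) (hφ₂ : IntegrableOn φ₂ Ω μ) :
    ∫ x, u₁ x * φ₁ x ∂μ + ∫ x, u₂ x * φ₂ x ∂μ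
      = ∫ x, u₁ x * (φ₁ x - φ₂ x) ∂μ + ∫ x in Ω, φ₂ x ∂μ := by
  have hu₂ : ∫ x, u₂ x * φ₂ x ∂μ = ∫ x in Ω, φ₂ x ∂μ - ∫ x, u₁ x * φ₂ x ∂μ := by
    rw [← integral_indicator hΩ, ← integral_sub (hφ₂.integrable_indicator hΩ)
      (integrable_mul_of_ae_le_indicator hΩ hu₁ hu₁₀₁ hφ₂)]
    refine integral_congr_ae ?_
    filter_upwards [hsum] with x hx
    rw [eq_sub_of_add_eq' hx]
    by_cases hxΩ : x ∈ Ω <;> simp [hxΩ, sub_mul]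
  simp_rw [hu₂, mul_sub]
  rw [integral_sub (integrable_mul_of_ae_le_indicator hΩ hu₁ hu₁₀₁ hφ₁)
    (integrable_mul_of_ae_le_indicator hΩ hu₁ hu₁₀₁ hφ₂)]
  ring

theorem integral_indicator_sublevel_mul_le {u ψ : α → ℝ} {δ : ℝ} (hΩ : MeasurableSet Ω)
    (hΩfin : μ Ω ≠ ∞) (hψm : Measurable ψ) (hψ : IntegrableOn ψ Ω μ)
    (hu : AEStronglyMeasurable u μ) (hu₀₁ : ∀ᵐ x ∂μ, 0 ≤ u x ∧ u x ≤ Ω.indicator 1 x)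
    (hmass : ∫ x, u x ∂μ = μ.real {x ∈ Ω | ψ x < δ}) :
    ∫ x, {x ∈ Ω | ψ x < δ}.indicator 1 x * ψ x ∂μ ≤ ∫ x, u x * ψ x ∂μ := by
  set D := {x ∈ Ω | ψ x < δ}
  have hD : MeasurableSet D := hΩ.inter (measurableSet_lt hψm measurable_const)
  have hD₀₁ := ae_of_all μ (indicator_one_nonneg_and_le_of_subset (sep_subset Ω (ψ · < δ)))
  have hD_meas : AEStronglyMeasurable (D.indicator (1 : α → ℝ)) μ :=
    (measurable_one.indicator hD).aestronglyMeasurable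
  have hone : IntegrableOn (1 : α → ℝ) Ω μ := integrableOn_const hΩfin
  have hint_u := integrable_mul_of_ae_le_indicator hΩ hu hu₀₁ hone
  have hint_D := integrable_mul_of_ae_le_indicator hΩ hD_meas hD₀₁ hone
  simp only [Pi.one_apply, mul_one] at hint_u hint_D
  have hint_uψ := integrable_mul_of_ae_le_indicator hΩ hu hu₀₁ hψ
  have hint_Dψ := integrable_mul_of_ae_le_indicator hΩ hD_meas hD₀₁ hψ
  have hsign : ∀ᵐ x ∂μ, 0 ≤ (u x - D.indicator 1 x) * (ψ x - δ) := by
    filter_upwards [hu₀₁] with x ⟨h0, h1⟩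
    by_cases hxD : x ∈ D
    · have hxΩ : x ∈ Ω := hxD.1
      simp only [hxD, hxΩ, indicator_of_mem, Pi.one_apply] at h1 ⊢
      exact mul_nonneg_of_nonpos_of_nonpos (by linarith) (by linarith [hxD.2])
    · rw [indicator_of_notMem hxD, sub_zero]
      by_cases hxΩ : x ∈ Ω
      · exact mul_nonneg h0 (sub_nonneg.2 (not_lt.1 fun h => hxD ⟨hxΩ, h⟩))
      · rw [indicator_of_notMem hxΩ] at h1
        rw [le_antisymm h1 h0, zero_mul]
  have hexpand : ∫ x, (u x - D.indicator 1 x) * (ψ x - δ) ∂μ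
      = (∫ x, u x * ψ x ∂μ - ∫ x, D.indicator 1 x * ψ x ∂μ)
        - δ * (∫ x, u x ∂μ - ∫ x, D.indicator 1 x ∂μ) := by
    calc _ = ∫ x, (u x * ψ x - D.indicator 1 x * ψ x) - δ * (u x - D.indicator 1 x) ∂μ := by
          congr 1 with x
          ring
      _ = _ := by
          have hint_diffψ : Integrable (fun x => u x * ψ x - D.indicator 1 x * ψ x) μ :=
            hint_uψ.sub hint_Dψ
          have hint_diff : Integrable (fun x => δ * (u x - D.indicator 1 x)) μ :=
            (hint_u.sub hint_D).const_mul δ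
          rw [integral_sub hint_diffψ hint_diff,
            integral_sub hint_uψ hint_Dψ, integral_const_mul, integral_sub hint_u hint_D]
  have := integral_nonneg_of_ae hsign
  rw [hexpand, hmass, integral_indicator_one hD, sub_self, mul_zero, sub_zero] at this
  linarith

end Thresholding

section Gaussian

variable {n : ℕ} {t : ℝ}

theorem gauss_nonneg (ht : 0 < t) (x : EuclideanSpace ℝ (Fin n)) : 0 ≤ gauss n t x := by
  unfold gauss
  positivity

theorem continuous_gauss : Continuous (gauss n t) := by
  unfold gauss
  fun_prop

theorem integrable_gauss (ht : 0 < t) : Integrable (gauss n t) := by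
  unfold gauss
  refine Integrable.const_mul ?_ _
  refine (GaussianFourier.integrable_cexp_neg_mul_sq_norm_add (V := EuclideanSpace ℝ (Fin n))
    (b := ((1 / (4 * t) : ℝ) : ℂ)) (by simp; positivity) 0 0).norm.congr (ae_of_all _ fun x => ?_)
  dsimp only
  rw [Complex.norm_exp]
  congr 1
  simp [Complex.mul_re, ← Complex.ofReal_pow]
  ring

theorem measurable_gconv {f : EuclideanSpace ℝ (Fin n) → ℝ} (hf : Measurable f) :
    Measurable (gconv n t f) :=
  (((continuous_gauss.measurable.comp (measurable_fst.sub measurable_snd)).mul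
    (hf.comp measurable_snd)).stronglyMeasurable.integral_prod_right').measurable

theorem abs_gconv_le (ht : 0 < t) {f : EuclideanSpace ℝ (Fin n) → ℝ} {M : ℝ}
    (hf : ∀ y, |f y| ≤ M) (x : EuclideanSpace ℝ (Fin n)) :
    |gconv n t f x| ≤ M * ∫ y, gauss n t y := by
  rw [← Real.norm_eq_abs, gconv]
  calc ‖∫ y, gauss n t (x - y) * f y‖ ≤ ∫ y, gauss n t (x - y) * M :=
        norm_integral_le_of_norm_le (((integrable_gauss ht).comp_sub_left x).mul_const M)
          (ae_of_all _ fun y => by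
            rw [norm_mul, Real.norm_of_nonneg (gauss_nonneg ht _), Real.norm_eq_abs]
            exact mul_le_mul_of_nonneg_left (hf y) (gauss_nonneg ht _))
    _ = M * ∫ y, gauss n t y := by
        rw [integral_mul_const, integral_sub_left_eq_self (gauss n t) volume x, mul_comm]

theorem integrableOn_gconv (ht : 0 < t) {f : EuclideanSpace ℝ (Fin n) → ℝ} {M : ℝ}
    (hfm : Measurable f) (hf : ∀ y, |f y| ≤ M) {s : Set (EuclideanSpace ℝ (Fin n))}
    (hs : volume s ≠ ∞) : IntegrableOn (gconv n t f) s :=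
  Measure.integrableOn_of_bounded hs (measurable_gconv hfm).aestronglyMeasurable
    (ae_of_all _ fun x => abs_gconv_le ht hf x)

end Gaussian

theorem chi_eq_indicator_one (n : ℕ) (A : Set (EuclideanSpace ℝ (Fin n))) :
    chi n A = A.indicator 1 :=
  rfl

theorem measurable_mul_chi_add_mul_chi {n : ℕ} (a b : ℝ) {A B : Set (EuclideanSpace ℝ (Fin n))}
    (hA : MeasurableSet A) (hB : MeasurableSet B) :
    Measurable fun y => a * chi n A y + b * chi n B y :=
  ((measurable_const.indicator hA).const_mul a).add ((measurable_const.indicator hB).const_mul b)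

theorem abs_mul_chi_add_mul_chi_le {n : ℕ} (a b : ℝ) (A B : Set (EuclideanSpace ℝ (Fin n)))
    (y : EuclideanSpace ℝ (Fin n)) : |a * chi n A y + b * chi n B y| ≤ |a| + |b| := by
  have hchi : ∀ C : Set (EuclideanSpace ℝ (Fin n)), |chi n C y| ≤ 1 := fun C => by
    unfold chi
    by_cases hy : y ∈ C <;> simp [hy]
  calc |a * chi n A y + b * chi n B y| ≤ |a| * |chi n A y| + |b| * |chi n B y| := by
        simpa only [abs_mul] using abs_add_le (a * chi n A y) (b * chi n B y)
    _ ≤ |a| + |b| := by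
        gcongr <;> [exact mul_le_of_le_one_right (abs_nonneg a) (hchi A);
          exact mul_le_of_le_one_right (abs_nonneg b) (hchi B)]

theorem thresholding_minimizes_linearized_general (n : ℕ)
    (Ωt Ω : Set (EuclideanSpace ℝ (Fin n)))
    (hΩtb : Bornology.IsBounded Ωt) (hΩtm : MeasurableSet Ωt)
    (hΩ : Ω ⊆ Ωt) (hΩm : MeasurableSet Ω)
    (γLV γSL γSV δt V₀ : ℝ)
    (hδt : 0 < δt) (hV₀ : 0 < V₀)
    (D₁k : Set (EuclideanSpace ℝ (Fin n))) (hD₁km : MeasurableSet D₁k)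
    (φ₁ φ₂ : EuclideanSpace ℝ (Fin n) → ℝ)
    (hφ₁ : φ₁ = fun x => (1 / Real.sqrt δt) *
      gconv n δt (fun y => γLV * chi n (Ω \ D₁k) y + γSL * chi n (Ωt \ Ω) y) x)
    (hφ₂ : φ₂ = fun x => (1 / Real.sqrt δt) *
      gconv n δt (fun y => γLV * chi n D₁k y + γSV * chi n (Ωt \ Ω) y) x)
    (δ : ℝ)
    (D₁next : Set (EuclideanSpace ℝ (Fin n)))
    (hD₁next : D₁next = {x ∈ Ω | φ₁ x < φ₂ x + δ})
    (hvol : volume D₁next = ENNReal.ofReal V₀) :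
    ∀ u₁ u₂ : EuclideanSpace ℝ (Fin n) → ℝ, (u₁, u₂) ∈ Kset n Ω V₀ →
      (∫ x, chi n D₁next x * φ₁ x) + (∫ x, chi n (Ω \ D₁next) x * φ₂ x)
        ≤ (∫ x, u₁ x * φ₁ x) + ∫ x, u₂ x * φ₂ x := by
  rintro u₁ u₂ ⟨hu₁m, -, hu, hu₁V⟩
  dsimp only at hu₁m hu hu₁V
  simp only [chi_eq_indicator_one] at hu ⊢
  have hΩfin : volume Ω ≠ ∞ := ((measure_mono hΩ).trans_lt hΩtb.measure_lt_top).ne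
  have hpot : ∀ (a b : ℝ) {A B : Set (EuclideanSpace ℝ (Fin n))}, MeasurableSet A →
      MeasurableSet B →
      let φ := fun x => 1 / √δt * gconv n δt (fun y => a * chi n A y + b * chi n B y) x
      Measurable φ ∧ IntegrableOn φ Ω := fun a b A B hA hB =>
    have hf := measurable_mul_chi_add_mul_chi a b hA hB
    ⟨(measurable_gconv hf).const_mul _,
      (integrableOn_gconv hδt hf (abs_mul_chi_add_mul_chi_le a b A B) hΩfin).const_mul _⟩
  obtain ⟨hφ₁m, hφ₁i⟩ := hφ₁ ▸ hpot γLV γSL (hΩm.diff hD₁km) (hΩtm.diff hΩm)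
  obtain ⟨hφ₂m, hφ₂i⟩ := hφ₂ ▸ hpot γLV γSV hD₁km (hΩtm.diff hΩm)
  have hD : D₁next = {x ∈ Ω | φ₁ x - φ₂ x < δ} := by simp_rw [hD₁next, sub_lt_iff_lt_add']
  have hsub : D₁next ⊆ Ω := hD₁next ▸ sep_subset _ _
  have hDm : MeasurableSet D₁next :=
    hD ▸ hΩm.inter (measurableSet_lt (hφ₁m.sub hφ₂m) measurable_const)
  have hu₁ : ∀ᵐ x ∂volume, 0 ≤ u₁ x ∧ u₁ x ≤ Ω.indicator 1 x := by
    filter_upwards [hu] with x ⟨hu₁0, _, hu₂0, _, hsum⟩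
    exact ⟨hu₁0, hsum ▸ le_add_of_nonneg_right hu₂0⟩
  have hmass : ∫ x, u₁ x = volume.real {x ∈ Ω | φ₁ x - φ₂ x < δ} := by
    rw [hu₁V, ← hD, measureReal_def, hvol, ENNReal.toReal_ofReal hV₀.le]
  rw [integral_mul_add_integral_mul_eq hΩm (measurable_one.indicator hDm).aestronglyMeasurable
      (ae_of_all _ (indicator_one_nonneg_and_le_of_subset hsub))
      (ae_of_all _ fun x => by rw [indicator_sdiff hsub, Pi.sub_apply, add_sub_cancel]) hφ₁i hφ₂i,
    integral_mul_add_integral_mul_eq hΩm hu₁m.aestronglyMeasurable hu₁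
      (hu.mono fun x hx => hx.2.2.2.2) hφ₁i hφ₂i]
  gcongr ?_ + _
  rw [hD]
  exact integral_indicator_sublevel_mul_le hΩm hΩfin (hφ₁m.sub hφ₂m) (hφ₁i.sub hφ₂i)
    hu₁m.aestronglyMeasurable hu₁ hmass

/-- the volume-preserving thresholding step minimizes the linearized
functional `L̂(u₁,u₂) = ∫ u₁ φ₁ + ∫ u₂ φ₂` over `K`. -/
theorem thresholding_minimizes_linearized (n : ℕ) (hn : 1 ≤ n)
    (Ωt Ω : Set (EuclideanSpace ℝ (Fin n)))
    (hΩtb : Bornology.IsBounded Ωt) (hΩtm : MeasurableSet Ωt)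
    (hΩ : Ω ⊆ Ωt) (hΩm : MeasurableSet Ω)
    (γLV γSL γSV δt V₀ : ℝ)
    (hγLV : 0 < γLV) (hγSL : 0 < γSL) (hγSV : 0 < γSV) (hδt : 0 < δt) (hV₀ : 0 < V₀)
    (D₁k : Set (EuclideanSpace ℝ (Fin n))) (hD₁k : D₁k ⊆ Ω) (hD₁km : MeasurableSet D₁k)
    (hB : (chi n D₁k, chi n (Ω \ D₁k)) ∈ Bset n Ω V₀)
    (φ₁ φ₂ : EuclideanSpace ℝ (Fin n) → ℝ)
    (hφ₁ : φ₁ = fun x => (1 / Real.sqrt δt) *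
      gconv n δt (fun y => γLV * chi n (Ω \ D₁k) y + γSL * chi n (Ωt \ Ω) y) x)
    (hφ₂ : φ₂ = fun x => (1 / Real.sqrt δt) *
      gconv n δt (fun y => γLV * chi n D₁k y + γSV * chi n (Ωt \ Ω) y) x)
    (δ : ℝ)
    (D₁next : Set (EuclideanSpace ℝ (Fin n)))
    (hD₁next : D₁next = {x ∈ Ω | φ₁ x < φ₂ x + δ})
    (hvol : volume D₁next = ENNReal.ofReal V₀) :
    ∀ u₁ u₂ : EuclideanSpace ℝ (Fin n) → ℝ, (u₁, u₂) ∈ Kset n Ω V₀ →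
      (∫ x, chi n D₁next x * φ₁ x) + (∫ x, chi n (Ω \ D₁next) x * φ₂ x)
        ≤ (∫ x, u₁ x * φ₁ x) + ∫ x, u₂ x * φ₂ x :=
  thresholding_minimizes_linearized_general n Ωt Ω hΩtb hΩtm hΩ hΩm γLV γSL γSV δt V₀ hδt hV₀ D₁k
    hD₁km φ₁ φ₂ hφ₁ hφ₂ δ D₁next hD₁next hvol
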